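/- Let (w_i)_{i=0}^{k^n-1} be the (k,n)-prefer-max cycle with k > 1, n ≥ 1, and let i_0 = min{ i : the symbol k-1 does not occur in w_i }. Then i_0 = k^n - (k-1)^n. -/

import Mathlib

/-!
A window `u` is the edge `u.dropLast → u.tail` of the de Bruijn graph on `[k]ⁿ⁻¹`, so the
prefer-max windows form a greedy trail from `0ⁿ⁻¹`; as long as no edge repeats, out-degree plus
`[v = current vertex]` equals in-degree plus `[v = 0ⁿ⁻¹]`. While every window contains `k - 1`, a
repeated window would give its vertex `k + 1` entering edges, so the first layer has no
repetitions. When the trail leaves the layer it stands at `0ⁿ⁻¹`, so the layer is balanced; with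
the greedy choice, balance makes the complement of the layer closed under shifting in a `0`;
rotating the last `k - 1` of a missing word around would then push the first window out of the
layer. So the layer consists of all `kⁿ - (k - 1)ⁿ` words containing `k - 1`.
-/

/-- `preferMaxAux k n i` is the list of windows `[wᵢ, wᵢ₋₁, ..., w₀]` of the
`(k,n)`-prefer-max cycle, newest first.  The first window is `w₀ = 0^{n-1}(k-1)` and,
if `wᵢ = σx`, then `wᵢ₊₁ = xτ` where `τ` is the maximal symbol in `[k] = {0,…,k-1}`
such that `xτ` has not appeared among `w₀,…,wᵢ` (computed via `Nat.findGreatest`,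
which returns `0` if no such symbol exists; the existence of such a symbol at each
step is part of the correctness of the construction). -/
def preferMaxAux (k n : ℕ) : ℕ → List (List ℕ)
  | 0 => [List.replicate (n - 1) 0 ++ [k - 1]]
  | i + 1 =>
    let prev := preferMaxAux k n i
    let w := prev.headI
    (w.tail ++ [Nat.findGreatest (fun τ => (w.tail ++ [τ]) ∉ prev) (k - 1)]) :: prev

/-- `preferMax k n i` is the `i`-th window `wᵢ` of the `(k,n)`-prefer-max cycle. -/
def preferMax (k n i : ℕ) : List ℕ := (preferMaxAux k n i).headI

open Finset

def words (k : ℕ) : ℕ → Finset (List ℕ)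
  | 0 => {[]}
  | m + 1 => (range k ×ˢ words k m).image fun p => p.1 :: p.2

lemma mem_words {k m : ℕ} {u : List ℕ} : u ∈ words k m ↔ u.length = m ∧ ∀ x ∈ u, x < k := by
  induction m generalizing u with
  | zero => cases u <;> simp [words]
  | succ m ih =>
    cases u with
    | nil => simp [words]
    | cons a l => simp [words, ih, and_assoc, and_left_comm]

lemma card_words (k m : ℕ) : #(words k m) = k ^ m := by
  induction m with
  | zero => simp [words]
  | succ m ih =>
    rw [words, card_image_of_injective _ fun p q h => by simpa [Prod.ext_iff] using h,
      card_product, card_range, ih, pow_succ, mul_comm]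

lemma card_words_filter_mem (k m : ℕ) : #{u ∈ words k m | k - 1 ∈ u} = k ^ m - (k - 1) ^ m := by
  have hfree : {u ∈ words k m | k - 1 ∉ u} = words (k - 1) m := by
    ext u
    simp only [mem_filter, mem_words, and_assoc]
    refine and_congr_right fun _ =>
      ⟨fun ⟨hlt, hu⟩ x hx => ?_, fun hlt => ⟨fun x hx => ?_, fun hu => ?_⟩⟩
    · have := hlt x hx
      have := ne_of_mem_of_not_mem hx hu
      omega
    · have := hlt x hx
      omega
    · have := hlt _ hu
      omega
  have := card_filter_add_card_filter_not (s := words k m) (p := (k - 1 ∈ ·))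
  rw [hfree, card_words, card_words] at this
  omega

lemma List.exists_eq_append_cons_not_mem {α : Type*} {a : α} {u : List α} (h : a ∈ u) :
    ∃ p z, u = p ++ a :: z ∧ a ∉ z := by
  induction u with
  | nil => simp at h
  | cons b t ih =>
    by_cases ht : a ∈ t
    · obtain ⟨p, z, rfl, hz⟩ := ih ht
      exact ⟨b :: p, z, rfl, hz⟩
    · obtain rfl : a = b := by simpa [ht] using h
      exact ⟨[], t, rfl, ht⟩

/-- A word `u` is the edge `u.dropLast → u.tail` of the de Bruijn graph; `outDeg k A v` and
`inDeg k A v` count the edges of `A` leaving and entering `v`. -/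
def outDeg (k : ℕ) (A : List (List ℕ)) (v : List ℕ) : ℕ := #{c ∈ range k | v ++ [c] ∈ A}

def inDeg (k : ℕ) (A : List (List ℕ)) (v : List ℕ) : ℕ := #{σ ∈ range k | σ :: v ∈ A}

section Degrees

variable {k n : ℕ} {A : List (List ℕ)}

lemma outDeg_eq_self_iff {v : List ℕ} : outDeg k A v = k ↔ ∀ c < k, v ++ [c] ∈ A := by
  simpa [outDeg] using card_filter_eq_iff (s := range k) (p := fun c => v ++ [c] ∈ A)

lemma inDeg_eq_self_iff {v : List ℕ} : inDeg k A v = k ↔ ∀ σ < k, σ :: v ∈ A := by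
  simpa [inDeg] using card_filter_eq_iff (s := range k) (p := fun σ => σ :: v ∈ A)

lemma ne_nil_of_mem_words (hn : 0 < n) {u : List ℕ} (hu : u ∈ words k n) : u ≠ [] :=
  List.ne_nil_of_length_pos ((mem_words.mp hu).1 ▸ hn)

lemma countP_dropLast_eq_outDeg (hn : 0 < n) (hA : A.Nodup) (hwords : ∀ u ∈ A, u ∈ words k n)
    (v : List ℕ) : A.countP (·.dropLast = v) = outDeg k A v := by
  have himage : (A.filter (·.dropLast = v)).toFinset =
      {c ∈ range k | v ++ [c] ∈ A}.image (v ++ [·]) := by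
    ext u
    simp only [List.mem_toFinset, List.mem_filter, decide_eq_true_eq, mem_image, mem_filter,
      mem_range]
    constructor
    · rintro ⟨hu, rfl⟩
      have hne := ne_nil_of_mem_words hn (hwords u hu)
      have hlast := List.dropLast_concat_getLast hne
      exact ⟨u.getLast hne, ⟨(mem_words.mp (hwords u hu)).2 _ (List.getLast_mem hne),
        by rwa [hlast]⟩, hlast⟩
    · rintro ⟨c, ⟨-, hc⟩, rfl⟩
      exact ⟨hc, List.dropLast_concat⟩
  rw [List.countP_eq_length_filter, ← List.toFinset_card_of_nodup (hA.filter _), himage,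
    card_image_of_injective _ fun a b h => by simpa using h, outDeg]

lemma countP_tail_eq_inDeg (hn : 0 < n) (hA : A.Nodup) (hwords : ∀ u ∈ A, u ∈ words k n)
    (v : List ℕ) : A.countP (·.tail = v) = inDeg k A v := by
  have himage : (A.filter (·.tail = v)).toFinset = {σ ∈ range k | σ :: v ∈ A}.image (· :: v) := by
    ext u
    simp only [List.mem_toFinset, List.mem_filter, decide_eq_true_eq, mem_image, mem_filter,
      mem_range]
    constructor
    · rintro ⟨hu, rfl⟩
      have hne := ne_nil_of_mem_words hn (hwords u hu)
      have hhead := List.cons_head_tail hne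
      exact ⟨u.head hne, ⟨(mem_words.mp (hwords u hu)).2 _ (List.head_mem hne),
        by rwa [hhead]⟩, hhead⟩
    · rintro ⟨σ, ⟨-, hσ⟩, rfl⟩
      exact ⟨hσ, rfl⟩
  rw [List.countP_eq_length_filter, ← List.toFinset_card_of_nodup (hA.filter _), himage,
    card_image_of_injective _ fun a b h => by simpa using h, inDeg]

lemma eq_of_cons_mem {a σ : ℕ} {v : List ℕ} (hA : ∀ u ∈ A, a ∈ u) (hv : a ∉ v)
    (h : σ :: v ∈ A) : σ = a := by
  simpa [hv, eq_comm] using hA _ h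

lemma inDeg_le_one {a : ℕ} {v : List ℕ} (hA : ∀ u ∈ A, a ∈ u) (hv : a ∉ v) : inDeg k A v ≤ 1 :=
  card_le_one.mpr fun _ hσ _ hτ =>
    (eq_of_cons_mem hA hv (mem_filter.mp hσ).2).trans
      (eq_of_cons_mem hA hv (mem_filter.mp hτ).2).symm

lemma cons_mem_of_inDeg_pos {a : ℕ} {v : List ℕ} (hA : ∀ u ∈ A, a ∈ u) (hv : a ∉ v)
    (h : 0 < inDeg k A v) : a :: v ∈ A := by
  obtain ⟨σ, hσ⟩ := card_pos.mp h
  have hmem := (mem_filter.mp hσ).2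
  rwa [eq_of_cons_mem hA hv hmem] at hmem

end Degrees

section Closure

variable {k : ℕ} {A : List (List ℕ)}

lemma append_zero_not_mem (hbal : ∀ v, outDeg k A v = inDeg k A v)
    (hgreedy : ∀ v, v ++ [0] ∈ A → ∀ c < k, v ++ [c] ∈ A) {σ : ℕ} {v : List ℕ} (hσ : σ < k)
    (h : σ :: v ∉ A) : v ++ [0] ∉ A := fun h0 =>
  h (inDeg_eq_self_iff.mp ((hbal v).symm.trans (outDeg_eq_self_iff.mpr (hgreedy v h0))) σ hσ)

lemma drop_append_replicate_not_mem (hbal : ∀ v, outDeg k A v = inDeg k A v)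
    (hgreedy : ∀ v, v ++ [0] ∈ A → ∀ c < k, v ++ [c] ∈ A) {u : List ℕ} (hu : u ∉ A)
    (hlt : ∀ x ∈ u, x < k) {s : ℕ} (hs : s ≤ u.length) : u.drop s ++ List.replicate s 0 ∉ A := by
  induction s with
  | zero => simpa using hu
  | succ s ih =>
    have h := ih (by omega)
    rw [List.drop_eq_getElem_cons (by omega), List.cons_append] at h
    simpa [List.replicate_succ'] using
      append_zero_not_mem hbal hgreedy (hlt _ (List.getElem_mem _)) h

lemma append_not_mem_of_cons_not_mem (hk : 0 < k) (hbal : ∀ v, outDeg k A v = inDeg k A v)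
    (hlayer : ∀ u ∈ A, k - 1 ∈ u) {z : List ℕ} (hz : k - 1 ∉ z) (h : (k - 1) :: z ∉ A) :
    z ++ [k - 1] ∉ A := fun hmem =>
  h <| cons_mem_of_inDeg_pos hlayer hz <| by
    rw [← hbal]
    exact card_pos.mpr ⟨k - 1, mem_filter.mpr ⟨mem_range.mpr (by omega), hmem⟩⟩

lemma mem_of_mem_words (hk : 1 < k) (hbal : ∀ v, outDeg k A v = inDeg k A v)
    (hgreedy : ∀ v, v ++ [0] ∈ A → ∀ c < k, v ++ [c] ∈ A) (hlayer : ∀ u ∈ A, k - 1 ∈ u) {n : ℕ}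
    (h0 : List.replicate (n - 1) 0 ++ [k - 1] ∈ A) {u : List ℕ} (hu : u ∈ words k n)
    (hmax : k - 1 ∈ u) : u ∈ A := by
  obtain ⟨hlen, hlt⟩ := mem_words.mp hu
  obtain ⟨p, z, rfl, hz⟩ := List.exists_eq_append_cons_not_mem hmax
  by_contra hA
  -- Shifting in zeros brings the last `k - 1` of `u` to the front; moving it to the back and
  -- shifting again ends at `(k - 1) 0ⁿ⁻¹`, whose rotation `0ⁿ⁻¹ (k - 1)` is the first window.
  set z' := z ++ List.replicate p.length 0
  have hz' : k - 1 ∉ z' := by simp [z', hz]; omega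
  have hlen' : z'.length = n - 1 := by simp [z'] at hlen ⊢; omega
  have h1 : (k - 1) :: z' ∉ A := by
    simpa [z'] using drop_append_replicate_not_mem hbal hgreedy hA hlt (s := p.length) (by simp)
  have h2 := append_not_mem_of_cons_not_mem (by omega) hbal hlayer hz' h1
  have h3 : (k - 1) :: List.replicate (n - 1) 0 ∉ A := by
    have := drop_append_replicate_not_mem hbal hgreedy h2 (s := n - 1) ?_ (by simp [hlen'])
    · rwa [List.drop_left' hlen'] at this
    · intro x hx
      simp only [z', List.mem_append, List.mem_replicate, List.mem_singleton] at hx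
      rcases hx with (hx | ⟨-, rfl⟩) | rfl
      · exact hlt x (by simp [hx])
      · omega
      · omega
  exact append_not_mem_of_cons_not_mem (by omega) hbal hlayer (by simp; omega) h3 h0

end Closure

section Windows

variable {k n : ℕ}

lemma preferMaxAux_succ (j : ℕ) :
    preferMaxAux k n (j + 1) = preferMax k n (j + 1) :: preferMaxAux k n j := rfl

lemma preferMax_zero : preferMax k n 0 = List.replicate (n - 1) 0 ++ [k - 1] := rfl

lemma preferMax_succ (j : ℕ) :
    preferMax k n (j + 1) = (preferMax k n j).tail ++
      [Nat.findGreatest (fun τ => (preferMax k n j).tail ++ [τ] ∉ preferMaxAux k n j) (k - 1)] :=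
  rfl

lemma mem_preferMaxAux {u : List ℕ} {j : ℕ} :
    u ∈ preferMaxAux k n j ↔ ∃ m ≤ j, preferMax k n m = u := by
  induction j with
  | zero => simp [preferMaxAux, preferMax, eq_comm]
  | succ j ih =>
    simp [preferMaxAux_succ, ih, Nat.le_add_one_iff, or_and_right, exists_or, eq_comm, or_comm]

lemma length_preferMaxAux (j : ℕ) : (preferMaxAux k n j).length = j + 1 := by
  induction j with
  | zero => rfl
  | succ j ih => rw [preferMaxAux_succ, List.length_cons, ih]

lemma preferMaxAux_subset {i j : ℕ} (h : i ≤ j) : preferMaxAux k n i ⊆ preferMaxAux k n j :=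
  fun _ hu => let ⟨m, hm, hu⟩ := mem_preferMaxAux.mp hu; mem_preferMaxAux.mpr ⟨m, hm.trans h, hu⟩

lemma preferMax_mem_words (hk : 0 < k) (hn : 0 < n) (i : ℕ) : preferMax k n i ∈ words k n := by
  induction i with
  | zero =>
    simp only [mem_words, preferMax_zero, List.length_append, List.length_replicate,
      List.length_singleton, List.mem_append, List.mem_replicate, List.mem_singleton]
    exact ⟨by omega, by omega⟩
  | succ i ih =>
    rw [mem_words] at ih ⊢
    rw [preferMax_succ]
    refine ⟨by simp [ih.1]; omega, fun x hx => ?_⟩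
    simp only [List.mem_append, List.mem_singleton] at hx
    rcases hx with hx | rfl
    · exact ih.2 x (List.mem_of_mem_tail hx)
    · have := Nat.findGreatest_le
        (P := fun τ => (preferMax k n i).tail ++ [τ] ∉ preferMaxAux k n i) (k - 1)
      omega

lemma preferMaxAux_subset_words (hk : 0 < k) (hn : 0 < n) (j : ℕ) :
    ∀ u ∈ preferMaxAux k n j, u ∈ words k n := fun _ hu =>
  let ⟨m, _, hm⟩ := mem_preferMaxAux.mp hu; hm ▸ preferMax_mem_words hk hn m

lemma preferMax_succ_not_mem_of_append_not_mem {j c : ℕ} (hc : c ≤ k - 1)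
    (h : (preferMax k n j).tail ++ [c] ∉ preferMaxAux k n j) :
    preferMax k n (j + 1) ∉ preferMaxAux k n j := by
  rw [preferMax_succ]
  exact Nat.findGreatest_spec
    (P := fun τ => (preferMax k n j).tail ++ [τ] ∉ preferMaxAux k n j) hc h

lemma preferMax_succ_of_append_not_mem {j : ℕ}
    (h : (preferMax k n j).tail ++ [k - 1] ∉ preferMaxAux k n j) :
    preferMax k n (j + 1) = (preferMax k n j).tail ++ [k - 1] := by
  rw [preferMax_succ, Nat.findGreatest_eq h]

lemma append_mem_preferMaxAux_of_le {j c c' : ℕ} {v : List ℕ}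
    (h : v ++ [c] ∈ preferMaxAux k n j) (hcc' : c ≤ c') (hc' : c' < k) :
    v ++ [c'] ∈ preferMaxAux k n j := by
  rcases hcc'.eq_or_lt with rfl | hcc'
  · exact h
  obtain ⟨m, hm, hw⟩ := mem_preferMaxAux.mp h
  cases m with
  | zero =>
    obtain ⟨-, hc⟩ := List.append_inj' (preferMax_zero.symm.trans hw) rfl
    simp only [List.cons.injEq, and_true] at hc
    omega
  | succ m =>
    obtain ⟨rfl, hc⟩ := List.append_inj' ((preferMax_succ m).symm.trans hw) rfl
    simp only [List.cons.injEq, and_true] at hc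
    have := Nat.findGreatest_is_greatest (hc ▸ hcc') (Nat.le_sub_one_of_lt hc')
    exact preferMaxAux_subset (by omega) (not_not.mp this)

lemma countP_dropLast_add_eq (j : ℕ) (v : List ℕ) :
    (preferMaxAux k n j).countP (·.dropLast = v) + (if (preferMax k n j).tail = v then 1 else 0) =
      (preferMaxAux k n j).countP (·.tail = v) + if List.replicate (n - 1) 0 = v then 1 else 0 := by
  induction j with
  | zero =>
    simp only [preferMaxAux, preferMax, List.headI, List.countP_singleton, List.dropLast_concat,
      decide_eq_true_eq]
    exact add_comm _ _
  | succ j ih =>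
    have hdrop : (preferMax k n (j + 1)).dropLast = (preferMax k n j).tail := by
      rw [preferMax_succ, List.dropLast_concat]
    rw [preferMaxAux_succ, List.countP_cons, List.countP_cons]
    simp only [hdrop, decide_eq_true_eq]
    split_ifs at ih ⊢ <;> omega

end Windows

section FirstLayer

variable {k n : ℕ}

lemma outDeg_add_eq_inDeg_add (hk : 0 < k) (hn : 0 < n) {j : ℕ}
    (hnd : (preferMaxAux k n j).Nodup) (v : List ℕ) :
    outDeg k (preferMaxAux k n j) v + (if (preferMax k n j).tail = v then 1 else 0) =
      inDeg k (preferMaxAux k n j) v + if List.replicate (n - 1) 0 = v then 1 else 0 := by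
  have hwords := preferMaxAux_subset_words hk hn j
  rw [← countP_dropLast_eq_outDeg hn hnd hwords, ← countP_tail_eq_inDeg hn hnd hwords]
  exact countP_dropLast_add_eq j v

lemma preferMax_succ_not_mem_preferMaxAux (hk : 1 < k) (hn : 0 < n) {j : ℕ}
    (hnd : (preferMaxAux k n j).Nodup) (hlayer : ∀ m ≤ j, k - 1 ∈ preferMax k n m) :
    preferMax k n (j + 1) ∉ preferMaxAux k n j := by
  set x := (preferMax k n j).tail
  obtain ⟨c, hc, hx⟩ : ∃ c ≤ k - 1, x ++ [c] ∉ preferMaxAux k n j := by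
    by_cases hmax : k - 1 ∈ x
    · by_contra! hall
      have hout : outDeg k (preferMaxAux k n j) x = k :=
        outDeg_eq_self_iff.mpr fun c hc => hall c (by omega)
      have hx0 : List.replicate (n - 1) 0 ≠ x := by
        rintro hx0
        rw [← hx0, List.mem_replicate] at hmax
        omega
      have hbal := outDeg_add_eq_inDeg_add (by omega) hn hnd x
      have hin : inDeg k (preferMaxAux k n j) x ≤ k :=
        (card_filter_le _ _).trans (card_range k).le
      rw [if_pos rfl, if_neg hx0, hout] at hbal
      omega
    · refine ⟨0, Nat.zero_le _, fun h0 => ?_⟩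
      obtain ⟨m, hm, hw⟩ := mem_preferMaxAux.mp h0
      have := hlayer m hm
      rw [hw, List.mem_append, List.mem_singleton] at this
      exact this.elim hmax (by omega)
  exact preferMax_succ_not_mem_of_append_not_mem hc hx

lemma nodup_preferMaxAux (hk : 1 < k) (hn : 0 < n) {j : ℕ}
    (hlayer : ∀ m < j, k - 1 ∈ preferMax k n m) : (preferMaxAux k n j).Nodup := by
  induction j with
  | zero => simp [preferMaxAux]
  | succ j ih =>
    have hnd := ih fun m hm => hlayer m (by omega)
    rw [preferMaxAux_succ, List.nodup_cons]
    exact ⟨preferMax_succ_not_mem_preferMaxAux hk hn hnd fun m hm => hlayer m (by omega), hnd⟩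

lemma max_mem_of_mem_preferMaxAux {j : ℕ} (hlayer : ∀ m ≤ j, k - 1 ∈ preferMax k n m) :
    ∀ u ∈ preferMaxAux k n j, k - 1 ∈ u := fun _ hu =>
  let ⟨m, hm, hw⟩ := mem_preferMaxAux.mp hu; hw ▸ hlayer m hm

lemma tail_preferMax_eq_replicate (hk : 1 < k) (hn : 0 < n) {j : ℕ}
    (hlayer : ∀ m ≤ j, k - 1 ∈ preferMax k n m) (hexit : k - 1 ∉ preferMax k n (j + 1)) :
    (preferMax k n j).tail = List.replicate (n - 1) 0 := by
  set x := (preferMax k n j).tail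
  have hx : k - 1 ∉ x := fun h => hexit (by rw [preferMax_succ]; exact List.mem_append_left _ h)
  have hmem : x ++ [k - 1] ∈ preferMaxAux k n j := by
    by_contra h
    apply hexit
    rw [preferMax_succ_of_append_not_mem h]
    exact List.mem_append_right _ (List.mem_singleton_self _)
  have hout : 0 < outDeg k (preferMaxAux k n j) x :=
    card_pos.mpr ⟨k - 1, mem_filter.mpr ⟨mem_range.mpr (by omega), hmem⟩⟩
  have hin : inDeg k (preferMaxAux k n j) x ≤ 1 :=
    inDeg_le_one (max_mem_of_mem_preferMaxAux hlayer) hx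
  have hbal := outDeg_add_eq_inDeg_add (by omega) hn
    (nodup_preferMaxAux hk hn fun m hm => hlayer m hm.le) x
  by_contra hne
  rw [if_pos rfl, if_neg (Ne.symm hne)] at hbal
  omega

lemma outDeg_eq_inDeg_of_exit (hk : 1 < k) (hn : 0 < n) {j : ℕ}
    (hlayer : ∀ m ≤ j, k - 1 ∈ preferMax k n m) (hexit : k - 1 ∉ preferMax k n (j + 1))
    (v : List ℕ) : outDeg k (preferMaxAux k n j) v = inDeg k (preferMaxAux k n j) v := by
  have hbal := outDeg_add_eq_inDeg_add (by omega) hn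
    (nodup_preferMaxAux hk hn fun m hm => hlayer m hm.le) v
  rw [tail_preferMax_eq_replicate hk hn hlayer hexit] at hbal
  omega

lemma mem_preferMaxAux_iff_of_exit (hk : 1 < k) (hn : 0 < n) {j : ℕ}
    (hlayer : ∀ m ≤ j, k - 1 ∈ preferMax k n m) (hexit : k - 1 ∉ preferMax k n (j + 1))
    {u : List ℕ} : u ∈ preferMaxAux k n j ↔ u ∈ words k n ∧ k - 1 ∈ u := by
  refine ⟨fun hu => ⟨preferMaxAux_subset_words (by omega) hn j u hu,
    max_mem_of_mem_preferMaxAux hlayer u hu⟩, fun ⟨hu, hmax⟩ => ?_⟩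
  exact mem_of_mem_words hk (outDeg_eq_inDeg_of_exit hk hn hlayer hexit)
    (fun _ h0 c hc => append_mem_preferMaxAux_of_le h0 c.zero_le hc)
    (max_mem_of_mem_preferMaxAux hlayer)
    (mem_preferMaxAux.mpr ⟨0, Nat.zero_le j, preferMax_zero⟩) hu hmax

end FirstLayer

/-- Let `i₀ = min { i : the symbol k-1 does not occur in wᵢ }` for the
`(k,n)`-prefer-max cycle with `k > 1`, `n ≥ 1`.  Then `i₀ = k^n - (k-1)^n`. -/
theorem preferMax_first_layer_length (k n i₀ : ℕ) (hk : 1 < k) (hn : 1 ≤ n)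
    (hi₀ : (k - 1) ∉ preferMax k n i₀)
    (hmin : ∀ j < i₀, (k - 1) ∈ preferMax k n j) :
    i₀ = k ^ n - (k - 1) ^ n := by
  obtain ⟨j, rfl⟩ : ∃ j, i₀ = j + 1 :=
    Nat.exists_eq_succ_of_ne_zero fun h => hi₀ (by simp [h, preferMax_zero])
  have hlayer : ∀ m ≤ j, k - 1 ∈ preferMax k n m := fun m hm => hmin m (by omega)
  have hlayer_eq : (preferMaxAux k n j).toFinset = {u ∈ words k n | k - 1 ∈ u} := by
    ext u
    rw [List.mem_toFinset, mem_filter, mem_preferMaxAux_iff_of_exit hk hn hlayer hi₀]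
  rw [← card_words_filter_mem, ← hlayer_eq,
    List.toFinset_card_of_nodup (nodup_preferMaxAux hk hn fun m hm => hlayer m hm.le),
    length_preferMaxAux]
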